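/- Branching probabilistic bisimilarity is a congruence for binary probabilistic choice: if μ₁ ≈_b ν₁ and μ₂ ≈_b ν₂ then μ₁ ⊕_r μ₂ ≈_b ν₁ ⊕_r ν₂ for any r ∈ (0,1). -/

import Mathlib

/-!
The convex closure of `≈_b`, relating `∑ i, p i • μᵢ` to `∑ i, p i • νᵢ` whenever `μᵢ ≈_b νᵢ`,
is itself a branching probabilistic bisimulation, and `μ₁ ⊕_r μ₂`, `ν₁ ⊕_r ν₂` is such a pair.
A convex decomposition or a step of `∑ i, p i • μᵢ` is split over the components through a
coupling of the two decompositions, each component is answered using `≈_b`, and the answers are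
recombined: `⟹`, `→(τ)` and `→α` are all closed under convex combinations.
-/

open scoped BigOperators
open Classical

namespace PBB

structure Distr (X : Type) where
  f : X → ℝ
  nonneg : ∀ x, 0 ≤ f x
  fin : (Function.support f).Finite
  sum_one : ∑ᶠ x, f x = 1

namespace Distr

variable {X : Type}

noncomputable def dirac (E : X) : Distr X where
  f := fun x => if x = E then 1 else 0
  nonneg := fun x => by by_cases h : x = E <;> simp [h]
  fin := Set.Finite.subset (Set.finite_singleton E) (by
    intro x hx
    simp only [Function.mem_support] at hx
    by_contra h
    simp only [Set.mem_singleton_iff] at h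
    simp [h] at hx)
  sum_one := by
    rw [finsum_eq_single _ E (by intro x hx; simp [hx])]
    simp

noncomputable def mix (r : ℝ) (h0 : 0 ≤ r) (h1 : r ≤ 1) (μ ν : Distr X) : Distr X where
  f := fun x => r * μ.f x + (1 - r) * ν.f x
  nonneg := fun x =>
    add_nonneg (mul_nonneg h0 (μ.nonneg x)) (mul_nonneg (by linarith) (ν.nonneg x))
  fin := Set.Finite.subset (μ.fin.union ν.fin) (by
    intro x hx
    simp only [Function.mem_support] at hx
    by_contra h
    simp only [Set.mem_union, Function.mem_support, not_or, not_not] at h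
    simp [h.1, h.2] at hx)
  sum_one := by
    have hf : (Function.support fun x => r * μ.f x).Finite :=
      Set.Finite.subset μ.fin (by
        intro x hx
        simp only [Function.mem_support] at hx ⊢
        intro h; simp [h] at hx)
    have hg : (Function.support fun x => (1 - r) * ν.f x).Finite :=
      Set.Finite.subset ν.fin (by
        intro x hx
        simp only [Function.mem_support] at hx ⊢
        intro h; simp [h] at hx)
    rw [finsum_add_distrib hf hg, ← mul_finsum μ.f r, ← mul_finsum ν.f (1 - r),
      μ.sum_one, ν.sum_one]
    ring

end Distr

def IsMix {X : Type} (r : ℝ) (μ ν ξ : Distr X) : Prop :=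
  ∀ x, ξ.f x = r * μ.f x + (1 - r) * ν.f x

def IsCombo {X I : Type} [Fintype I] (p : I → ℝ) (μs : I → Distr X) (ξ : Distr X) : Prop :=
  (∀ i, 0 ≤ p i) ∧ (∑ i, p i = 1) ∧ ∀ x, ξ.f x = ∑ i, p i * (μs i).f x

/-! ### The probabilistic process calculus -/

mutual
/-- Non-deterministic processes: `E ::= 0 | α.P | E + E`. -/
inductive PE (Act : Type) : Type where
  | zero : PE Act
  | pre : Act → PP Act → PE Act
  | plus : PE Act → PE Act → PE Act

/-- Probabilistic processes: `P ::= ∂(E) | P ⊕_r P` with `r ∈ (0,1)`. -/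
inductive PP (Act : Type) : Type where
  | dirac : PE Act → PP Act
  | pchoice : PP Act → (r : ℝ) → 0 < r → r < 1 → PP Act → PP Act
end

variable {Act : Type}

/-- The distribution `⟦P⟧` denoted by a probabilistic process. -/
noncomputable def den : PP Act → Distr (PE Act)
  | .dirac E => Distr.dirac E
  | .pchoice P r h0 h1 Q => Distr.mix r h0.le h1.le (den P) (den Q)

/-- The transition relation `E →α μ` on non-deterministic processes. -/
inductive pstep : PE Act → Act → Distr (PE Act) → Prop where
  | pre (α : Act) (P : PP Act) : pstep (.pre α P) α (den P)
  | left {E₁ E₂ : PE Act} {α : Act} {μ : Distr (PE Act)} :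
      pstep E₁ α μ → pstep (.plus E₁ E₂) α μ
  | right {E₁ E₂ : PE Act} {α : Act} {μ : Distr (PE Act)} :
      pstep E₂ α μ → pstep (.plus E₁ E₂) α μ

/-- The (combined) transition relation `μ →α μ'` on distributions. -/
def dstep (μ : Distr (PE Act)) (α : Act) (μ' : Distr (PE Act)) : Prop :=
  ∃ (I : Type) (_ : Fintype I) (p : I → ℝ) (Es : I → PE Act) (μs : I → Distr (PE Act)),
    IsCombo p (fun i => Distr.dirac (Es i)) μ ∧ IsCombo p μs μ' ∧
    ∀ i, pstep (Es i) α (μs i)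

variable (τ : Act)

/-- The partial silent step `μ →(τ) μ'`. -/
def ptau (μ μ' : Distr (PE Act)) : Prop :=
  dstep μ τ μ' ∨
  ∃ (s : ℝ) (μ₁ μ₂ μ₁' : Distr (PE Act)), 0 ≤ s ∧ s ≤ 1 ∧
    IsMix s μ₁ μ₂ μ ∧ IsMix s μ₁' μ₂ μ' ∧ dstep μ₁ τ μ₁'

/-- `μ ⟹ μ'`: the reflexive-transitive closure of `→(τ)`. -/
def wtau : Distr (PE Act) → Distr (PE Act) → Prop :=
  Relation.ReflTransGen (ptau τ)

/-- The optional step `μ →(α) μ'`. -/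
def optStep (μ : Distr (PE Act)) (α : Act) (μ' : Distr (PE Act)) : Prop :=
  dstep μ α μ' ∨ (α = τ ∧ ptau τ μ μ')

/-- Weak decomposability of a relation on distributions. -/
def WeaklyDecomposable (R : Distr (PE Act) → Distr (PE Act) → Prop) : Prop :=
  ∀ (I : Type) (_ : Fintype I) (p : I → ℝ) (μs : I → Distr (PE Act))
    (μ ν : Distr (PE Act)),
    R μ ν → IsCombo p μs μ →
    ∃ (ν' : Distr (PE Act)) (νs : I → Distr (PE Act)),
      wtau τ ν ν' ∧ R μ ν' ∧ IsCombo p νs ν' ∧ ∀ i, R (μs i) (νs i)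

/-- Decomposability of a relation on distributions. -/
def Decomposable (R : Distr (PE Act) → Distr (PE Act) → Prop) : Prop :=
  ∀ (I : Type) (_ : Fintype I) (p : I → ℝ) (μs : I → Distr (PE Act))
    (μ ν : Distr (PE Act)),
    R μ ν → IsCombo p μs μ →
    ∃ νs : I → Distr (PE Act), IsCombo p νs ν ∧ ∀ i, R (μs i) (νs i)

/-- Branching probabilistic bisimulation relations. -/
def IsBranchingBisim (R : Distr (PE Act) → Distr (PE Act) → Prop) : Prop :=
  Symmetric R ∧ WeaklyDecomposable τ R ∧
  ∀ μ ν α μ', R μ ν → dstep μ α μ' →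
    ∃ ν' ν'', wtau τ ν ν' ∧ optStep τ ν' α ν'' ∧ R μ ν' ∧ R μ' ν''

/-- Branching probabilistic bisimilarity `≈_b`. -/
def bb (μ ν : Distr (PE Act)) : Prop :=
  ∃ R, IsBranchingBisim τ R ∧ R μ ν

/-- Strong probabilistic bisimulation relations. -/
def IsStrongBisim (R : Distr (PE Act) → Distr (PE Act) → Prop) : Prop :=
  Symmetric R ∧ Decomposable R ∧
  ∀ μ ν α μ', R μ ν → dstep μ α μ' →
    ∃ ν', dstep ν α ν' ∧ R μ' ν'

/-- Strong probabilistic bisimilarity `∼`. -/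
def sb (μ ν : Distr (PE Act)) : Prop :=
  ∃ R, IsStrongBisim R ∧ R μ ν

/-- Rooted branching probabilistic bisimulation relations. -/
def IsRootedBranchingBisim (R : Distr (PE Act) → Distr (PE Act) → Prop) : Prop :=
  Symmetric R ∧ Decomposable R ∧
  ∀ μ ν α μ', R μ ν → dstep μ α μ' →
    ∃ ν', dstep ν α ν' ∧ bb τ μ' ν'

/-- Rooted branching probabilistic bisimilarity `≈_rb`. -/
def rbb (μ ν : Distr (PE Act)) : Prop :=
  ∃ R, IsRootedBranchingBisim τ R ∧ R μ ν

/-- `≈_b`-stability of a distribution. -/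
def Stable (μ : Distr (PE Act)) : Prop :=
  ∀ μ', wtau τ μ μ' → bb τ μ μ' → μ' = μ

/-- A state is rigid iff it admits no inert `τ`-transition. -/
def Rigid (E : PE Act) : Prop :=
  ¬ ∃ μ, pstep E τ μ ∧ bb τ (Distr.dirac E) μ

/-- `E ⊑ P`: every transition of `E` is matched by an optional transition of `⟦P⟧`
with branching probabilistically bisimilar target. -/
def sq (E : PE Act) (P : PP Act) : Prop :=
  ∀ α μ, pstep E α μ → ∃ ν, optStep τ (den P) α ν ∧ bb τ μ ν

namespace Distr

variable {X : Type}

theorem ext {μ ν : Distr X} (h : ∀ x, μ.f x = ν.f x) : μ = ν := by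
  cases μ; cases ν; congr; exact funext h

theorem eq_dirac {μ : Distr X} {E : X} (h : ∀ x, x ≠ E → μ.f x = 0) : μ = dirac E := by
  have hE : μ.f E = 1 := by rw [← μ.sum_one, finsum_eq_single _ E h]
  refine ext fun x => ?_
  by_cases hx : x = E
  · simp [dirac, hx, hE]
  · simp [dirac, hx, h x hx]

noncomputable def normalize (g : X → ℝ) (hg : ∀ x, 0 ≤ g x) (hfin : g.support.Finite)
    (d : Distr X) : Distr X :=
  if h : ∑ᶠ x, g x = 0 then d else
    { f := fun x => g x / ∑ᶠ y, g y
      nonneg := fun x => div_nonneg (hg x) (finsum_nonneg hg)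
      fin := hfin.subset fun x hx => left_ne_zero_of_mul (by simpa [div_eq_mul_inv] using hx)
      sum_one := by simp_rw [div_eq_mul_inv, ← finsum_mul, mul_inv_cancel₀ h] }

theorem finsum_mul_normalize_f (g : X → ℝ) (hg : ∀ x, 0 ≤ g x) (hfin : g.support.Finite)
    (d : Distr X) (x : X) : (∑ᶠ y, g y) * (normalize g hg hfin d).f x = g x := by
  unfold normalize
  split_ifs with h
  · rw [h, zero_mul]
    exact le_antisymm (hg x) (h ▸ single_le_finsum x hfin hg)
  · exact mul_div_cancel₀ _ h

variable {I : Type} [Fintype I]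

theorem support_sum_mul_f_finite (u : I → ℝ) (μs : I → Distr X) :
    (fun x => ∑ i, u i * (μs i).f x).support.Finite :=
  (Set.finite_iUnion fun i => (μs i).fin).subset fun x hx => by
    obtain ⟨i, -, hi⟩ := by simpa using Finset.support_sum _ _ hx
    exact Set.mem_iUnion.2 ⟨i, hi⟩

theorem finsum_sum_mul_f (u : I → ℝ) (μs : I → Distr X) :
    ∑ᶠ x, ∑ i, u i * (μs i).f x = ∑ i, u i := by
  rw [finsum_sum_comm _ _ fun i _ => (μs i).fin.subset (Function.support_mul_subset_right _ _)]
  simp_rw [← mul_finsum, sum_one, mul_one]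

/-- The mixture `∑ i, u i • μs i` rescaled to total mass one; it is `d` when all weights vanish. -/
noncomputable def mixture (u : I → ℝ) (hu : ∀ i, 0 ≤ u i) (μs : I → Distr X) (d : Distr X) :
    Distr X :=
  normalize (fun x => ∑ i, u i * (μs i).f x)
    (fun x => Finset.sum_nonneg fun i _ => mul_nonneg (hu i) ((μs i).nonneg x))
    (support_sum_mul_f_finite u μs) d

theorem sum_mul_mixture_f (u : I → ℝ) (hu : ∀ i, 0 ≤ u i) (μs : I → Distr X) (d : Distr X)
    (x : X) : (∑ i, u i) * (mixture u hu μs d).f x = ∑ i, u i * (μs i).f x := by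
  rw [← finsum_sum_mul_f u μs]
  exact finsum_mul_normalize_f _ _ _ d x

theorem mixture_of_sum_eq_zero {u : I → ℝ} (hu : ∀ i, 0 ≤ u i) (μs : I → Distr X)
    (d : Distr X) (h : ∑ i, u i = 0) : mixture u hu μs d = d := by
  rw [mixture, normalize, dif_pos (by rwa [finsum_sum_mul_f])]

end Distr

section IsCombo

variable {X I : Type} [Fintype I] {p : I → ℝ} {μs : I → Distr X} {μ : Distr X}

theorem IsCombo.unique {μ' : Distr X} (h : IsCombo p μs μ) (h' : IsCombo p μs μ') : μ = μ' :=
  Distr.ext fun x => (h.2.2 x).trans (h'.2.2 x).symm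

theorem IsCombo.mul_f_eq_zero (h : IsCombo p μs μ) {x : X} (hx : μ.f x = 0) (i : I) :
    p i * (μs i).f x = 0 :=
  (Finset.sum_eq_zero_iff_of_nonneg fun j _ => mul_nonneg (h.1 j) ((μs j).nonneg x)).1
    ((h.2.2 x).symm.trans hx) i (Finset.mem_univ i)

theorem isCombo_punit (μ : Distr X) : IsCombo (fun _ : PUnit => (1 : ℝ)) (fun _ => μ) μ :=
  ⟨fun _ => zero_le_one, by simp, fun x => by simp⟩

theorem isCombo_div_iff {u : I → ℝ} (hu : ∀ i, 0 ≤ u i) (h0 : ∑ i, u i ≠ 0) :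
    IsCombo (fun i => u i / ∑ j, u j) μs μ ↔ ∀ x, (∑ i, u i) * μ.f x = ∑ i, u i * (μs i).f x := by
  have hsum : ∀ x, ∑ i, u i / (∑ j, u j) * (μs i).f x = (∑ i, u i * (μs i).f x) / ∑ j, u j :=
    fun x => by rw [Finset.sum_div]; exact Finset.sum_congr rfl fun i _ => by ring
  refine ⟨fun h x => by rw [h.2.2 x, hsum, mul_div_cancel₀ _ h0], fun h => ⟨?_, ?_, fun x => ?_⟩⟩
  · exact fun i => div_nonneg (hu i) (Finset.sum_nonneg fun j _ => hu j)
  · rw [← Finset.sum_div, div_self h0]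
  · rw [hsum, ← h x, mul_div_cancel_left₀ _ h0]

theorem exists_isCombo (hp : ∀ i, 0 ≤ p i) (hs : ∑ i, p i = 1) (μs : I → Distr X) :
    ∃ μ, IsCombo p μs μ := by
  obtain ⟨i, -, -⟩ := Finset.exists_ne_zero_of_sum_ne_zero (hs.symm ▸ one_ne_zero : ∑ i, p i ≠ 0)
  refine ⟨Distr.mixture p hp μs (μs i), hp, hs, fun x => ?_⟩
  rw [← Distr.sum_mul_mixture_f p hp μs (μs i) x, hs, one_mul]

theorem IsCombo.subtype_ne_zero (h : IsCombo p μs μ) :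
    IsCombo (fun i : {i // p i ≠ 0} => p i) (fun i => μs i) μ := by
  have hsub : ∀ g : I → ℝ, (∀ i, p i = 0 → g i = 0) → ∑ i : {i // p i ≠ 0}, g i = ∑ i, g i :=
    fun g hg => by
      rw [← Finset.sum_subtype (Finset.univ.filter fun i => p i ≠ 0) (by simp),
        Finset.sum_filter_of_ne fun i _ hi => mt (hg i) hi]
  refine ⟨fun i => h.1 i, ?_, fun x => ?_⟩
  · rw [hsub p fun _ => id, h.2.1]
  · rw [h.2.2 x, ← hsub (fun i => p i * (μs i).f x) fun i hi => by rw [hi, zero_mul]]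

theorem IsCombo.sigma {a : I → Distr X} {J : I → Type} [∀ i, Fintype (J i)]
    {q : ∀ i, J i → ℝ} {κs : ∀ i, J i → Distr X} (h : IsCombo p a μ)
    (hq : ∀ i, IsCombo (q i) (κs i) (a i)) :
    IsCombo (fun z : Σ i, J i => p z.1 * q z.1 z.2) (fun z => κs z.1 z.2) μ := by
  refine ⟨fun z => mul_nonneg (h.1 z.1) ((hq z.1).1 z.2), ?_, fun x => ?_⟩
  · simp_rw [Fintype.sum_sigma, ← Finset.mul_sum, (hq _).2.1, mul_one, h.2.1]
  · simp_rw [Fintype.sum_sigma, mul_assoc, ← Finset.mul_sum, ← (hq _).2.2 x, h.2.2 x]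

end IsCombo

/-- Two convex decompositions of one distribution have a common refinement: `w i j` is the mass
shared by the `i`-th and the `j`-th component, and `ξ i j` is that shared part, normalized. -/
theorem IsCombo.exists_coupling {X I J : Type} [Fintype I] [Fintype J] {p : I → ℝ} {q : J → ℝ}
    {μs : I → Distr X} {κs : J → Distr X} {μ : Distr X}
    (hp : IsCombo p μs μ) (hq : IsCombo q κs μ) :
    ∃ (w : I → J → ℝ) (ξ : I → J → Distr X), (∀ i j, 0 ≤ w i j) ∧
      (∀ i, ∑ j, w i j = p i) ∧ (∀ j, ∑ i, w i j = q j) ∧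
      (∀ i x, p i * (μs i).f x = ∑ j, w i j * (ξ i j).f x) ∧
      (∀ j x, q j * (κs j).f x = ∑ i, w i j * (ξ i j).f x) ∧
      (∀ i j x, (κs j).f x = 0 → w i j * (ξ i j).f x = 0) := by
  set m : I → J → X → ℝ := fun i j x => p i * (μs i).f x * (q j * (κs j).f x) / μ.f x
  have hm0 : ∀ i j x, 0 ≤ m i j x := fun i j x =>
    div_nonneg (mul_nonneg (mul_nonneg (hp.1 i) ((μs i).nonneg x))
      (mul_nonneg (hq.1 j) ((κs j).nonneg x))) (μ.nonneg x)
  have hmfin : ∀ i j, (m i j).support.Finite := fun i j =>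
    (μs i).fin.subset fun x hx => by simp_all [m]
  have hrow : ∀ i x, ∑ j, m i j x = p i * (μs i).f x := fun i x => by
    rw [← Finset.sum_div, ← Finset.mul_sum, ← hq.2.2 x]
    exact mul_div_cancel_of_imp fun hx => hp.mul_f_eq_zero hx i
  have hcol : ∀ j x, ∑ i, m i j x = q j * (κs j).f x := fun j x => by
    rw [← Finset.sum_div, ← Finset.sum_mul, ← hp.2.2 x]
    exact mul_div_cancel_left_of_imp fun hx => hq.mul_f_eq_zero hx j
  have hmass : ∀ (r : ℝ) (ν : Distr X), ∑ᶠ x, r * ν.f x = r := fun r ν => by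
    rw [← mul_finsum, ν.sum_one, mul_one]
  refine ⟨fun i j => ∑ᶠ x, m i j x, fun i j => Distr.normalize (m i j) (hm0 i j) (hmfin i j) μ,
    fun i j => finsum_nonneg (hm0 i j), fun i => ?_, fun j => ?_, fun i x => ?_, fun j x => ?_,
    fun i j x hx => ?_⟩
  · rw [← finsum_sum_comm _ (fun x j => m i j x) fun j _ => hmfin i j]
    simp_rw [hrow, hmass]
  · rw [← finsum_sum_comm _ (fun x i => m i j x) fun i _ => hmfin i j]
    simp_rw [hcol, hmass]
  · simp_rw [Distr.finsum_mul_normalize_f, hrow]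
  · simp_rw [Distr.finsum_mul_normalize_f, hcol]
  · simp [Distr.finsum_mul_normalize_f, m, hx]

section Iterate

variable {α : Type*} {r : α → α → Prop}

theorem reflTransGen_iff_exists_iterate_comp {a b : α} :
    Relation.ReflTransGen r a b ↔ ∃ n, (Relation.Comp r)^[n] Eq a b := by
  constructor
  · intro h
    induction h using Relation.ReflTransGen.head_induction_on with
    | refl => exact ⟨0, rfl⟩
    | head hac _ ih =>
      obtain ⟨n, hn⟩ := ih
      exact ⟨n + 1, by rw [Function.iterate_succ_apply']; exact ⟨_, hac, hn⟩⟩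
  · rintro ⟨n, hn⟩
    induction n generalizing a with
    | zero => exact hn ▸ .refl
    | succ n ih =>
      rw [Function.iterate_succ_apply'] at hn
      obtain ⟨c, hac, hcb⟩ := hn
      exact .head hac (ih hcb)

theorem iterate_comp_mono (hr : ∀ a, r a a) {m n : ℕ} (hmn : m ≤ n) {a b : α}
    (h : (Relation.Comp r)^[m] Eq a b) : (Relation.Comp r)^[n] Eq a b := by
  induction hmn with
  | refl => exact h
  | step _ ih => rw [Function.iterate_succ_apply']; exact ⟨a, hr a, ih⟩

end Iterate

def IsConvexClosed {X : Type} (r : Distr X → Distr X → Prop) : Prop :=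
  ∀ (I : Type) [Fintype I] (p : I → ℝ) (a b : I → Distr X) (μ μ' : Distr X),
    IsCombo p a μ → IsCombo p b μ' → (∀ i, r (a i) (b i)) → r μ μ'

namespace IsConvexClosed

variable {X : Type} {r : Distr X → Distr X → Prop}

theorem of_ne_zero (hr : IsConvexClosed r) {I : Type} [Fintype I] {p : I → ℝ}
    {a b : I → Distr X} {μ μ' : Distr X} (hμ : IsCombo p a μ) (hμ' : IsCombo p b μ')
    (h : ∀ i, p i ≠ 0 → r (a i) (b i)) : r μ μ' :=
  hr _ _ _ _ _ _ hμ.subtype_ne_zero hμ'.subtype_ne_zero fun i => h i i.2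

theorem iterate_comp (hr : IsConvexClosed r) (n : ℕ) :
    IsConvexClosed ((Relation.Comp r)^[n] Eq) := by
  induction n with
  | zero =>
    intro I _ p a b μ μ' hμ hμ' h
    exact hμ.unique (funext h ▸ hμ')
  | succ n ih =>
    intro I _ p a b μ μ' hμ hμ' h
    simp only [Function.iterate_succ_apply'] at h ⊢
    choose c hac hcb using h
    obtain ⟨ν, hν⟩ := exists_isCombo hμ.1 hμ.2.1 c
    exact ⟨ν, hr _ _ _ _ _ _ hμ hν hac, ih _ _ _ _ _ _ hν hμ' hcb⟩

/-- All paths are padded, by reflexivity, to a common length and then advanced in lockstep. -/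
theorem reflTransGen (hr : IsConvexClosed r) (hrefl : ∀ μ, r μ μ) :
    IsConvexClosed (Relation.ReflTransGen r) := by
  intro I _ p a b μ μ' hμ hμ' h
  choose n hn using fun i => reflTransGen_iff_exists_iterate_comp.1 (h i)
  exact reflTransGen_iff_exists_iterate_comp.2 ⟨_, hr.iterate_comp (Finset.univ.sup n) _ p a b μ μ'
    hμ hμ' fun i => iterate_comp_mono hrefl (Finset.le_sup (Finset.mem_univ i)) (hn i)⟩

end IsConvexClosed

section Steps

variable {τ}

theorem dstep_dirac_pre (α : Act) (P : PP Act) : dstep (Distr.dirac (PE.pre α P)) α (den P) :=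
  ⟨PUnit, inferInstance, _, fun _ => PE.pre α P, _, isCombo_punit _, isCombo_punit _,
    fun _ => pstep.pre α P⟩

theorem dstep_isConvexClosed (α : Act) : IsConvexClosed (dstep · α ·) := by
  intro I _ p a b μ μ' hμ hμ' h
  choose J _ q Es ms hE hm hstep using h
  exact ⟨Σ i, J i, inferInstance, fun z => p z.1 * q z.1 z.2, fun z => Es z.1 z.2,
    fun z => ms z.1 z.2, hμ.sigma hE, hμ'.sigma hm, fun z => hstep z.1 z.2⟩

theorem dstep_mixture {I : Type} [Fintype I] {u : I → ℝ} (hu : ∀ i, 0 ≤ u i)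
    {a b : I → Distr (PE Act)} {d d' : Distr (PE Act)} {α : Act}
    (h : ∀ i, dstep (a i) α (b i)) (hd : dstep d α d') :
    dstep (Distr.mixture u hu a d) α (Distr.mixture u hu b d') := by
  by_cases h0 : ∑ i, u i = 0
  · rwa [Distr.mixture_of_sum_eq_zero hu a d h0, Distr.mixture_of_sum_eq_zero hu b d' h0]
  · exact dstep_isConvexClosed α I _ _ _ _ _
      ((isCombo_div_iff hu h0).2 (Distr.sum_mul_mixture_f u hu a d))
      ((isCombo_div_iff hu h0).2 (Distr.sum_mul_mixture_f u hu b d')) h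

theorem ptau_refl (μ : Distr (PE Act)) : ptau τ μ μ :=
  Or.inr ⟨0, _, μ, _, le_rfl, zero_le_one, fun x => by ring, fun x => by ring,
    dstep_dirac_pre τ (PP.dirac PE.zero)⟩

theorem ptau_iff_isMix {μ μ' : Distr (PE Act)} :
    ptau τ μ μ' ↔ ∃ (s : ℝ) (μ₁ μ₂ μ₁' : Distr (PE Act)), 0 ≤ s ∧ s ≤ 1 ∧
      IsMix s μ₁ μ₂ μ ∧ IsMix s μ₁' μ₂ μ' ∧ dstep μ₁ τ μ₁' :=
  ⟨fun h => h.elim (fun h => ⟨1, μ, μ, μ', zero_le_one, le_rfl,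
    fun x => by ring, fun x => by ring, h⟩) id, Or.inr⟩

theorem IsCombo.isMix_mixture {X I : Type} [Fintype I] {p s : I → ℝ} {a κ ρ : I → Distr X}
    {μ : Distr X} (hμ : IsCombo p a μ) (hmix : ∀ i, IsMix (s i) (κ i) (ρ i) (a i))
    (hu : ∀ i, 0 ≤ p i * s i) (hv : ∀ i, 0 ≤ p i * (1 - s i)) (d d' : Distr X) :
    IsMix (∑ i, p i * s i) (Distr.mixture _ hu κ d) (Distr.mixture _ hv ρ d') μ := by
  intro x
  have hv1 : ∑ i, p i * (1 - s i) = 1 - ∑ i, p i * s i := by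
    simp only [mul_sub, mul_one, Finset.sum_sub_distrib, hμ.2.1]
  rw [← hv1, Distr.sum_mul_mixture_f, Distr.sum_mul_mixture_f, hμ.2.2 x,
    ← Finset.sum_add_distrib]
  exact Finset.sum_congr rfl fun i _ => by rw [hmix i x]; ring

/-- The moving parts of the components are gathered into one moving part, with weight
`∑ i, p i * s i`. -/
theorem ptau_isConvexClosed : IsConvexClosed (ptau τ) := by
  intro I _ p a b μ μ' hμ hμ' h
  choose s κ ρ κ' hs0 hs1 hma hmb hd using fun i => ptau_iff_isMix.1 (h i)
  have hu : ∀ i, 0 ≤ p i * s i := fun i => mul_nonneg (hμ.1 i) (hs0 i)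
  have hv : ∀ i, 0 ≤ p i * (1 - s i) := fun i => mul_nonneg (hμ.1 i) (sub_nonneg.2 (hs1 i))
  have hS1 : ∑ i, p i * s i ≤ 1 :=
    hμ.2.1 ▸ Finset.sum_le_sum fun i _ => mul_le_of_le_one_right (hμ.1 i) (hs1 i)
  exact ptau_iff_isMix.2 ⟨_, _, _, _, Finset.sum_nonneg fun i _ => hu i, hS1,
    hμ.isMix_mixture hma hu hv (Distr.dirac (PE.pre τ (PP.dirac PE.zero))) μ,
    hμ'.isMix_mixture hmb hu hv (den (PP.dirac PE.zero)) μ,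
    dstep_mixture hu hd (dstep_dirac_pre τ _)⟩

theorem wtau_isConvexClosed : IsConvexClosed (wtau τ) :=
  ptau_isConvexClosed.reflTransGen ptau_refl

theorem optStep_isConvexClosed (α : Act) : IsConvexClosed (optStep τ · α ·) := by
  intro I _ p a b μ μ' hμ hμ' h
  by_cases hα : α = τ
  · subst hα
    exact Or.inr ⟨rfl, ptau_isConvexClosed I p a b μ μ' hμ hμ' fun i => (h i).elim Or.inl And.right⟩
  · exact Or.inl (dstep_isConvexClosed α I p a b μ μ' hμ hμ' fun i =>
      (h i).resolve_right fun h => hα h.1)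

/-- Coupling `μs` with the point masses `Es k` that perform the step shows that each component is
itself a combination of those point masses. -/
theorem IsCombo.exists_dstep {I : Type} [Fintype I] {p : I → ℝ} {μs : I → Distr (PE Act)}
    {μ μ' : Distr (PE Act)} {α : Act} (hμ : IsCombo p μs μ) (h : dstep μ α μ') :
    ∃ μs' : I → Distr (PE Act), IsCombo p μs' μ' ∧ ∀ i, p i ≠ 0 → dstep (μs i) α (μs' i) := by
  obtain ⟨K, _, c, Es, ms, hE, hm, hstep⟩ := h
  obtain ⟨w, ξ, hw0, hrow, hcol, hrowx, -, hsupp⟩ := hμ.exists_coupling hE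
  have hξ : ∀ i k x, w i k * (ξ i k).f x = w i k * (Distr.dirac (Es k)).f x := by
    intro i k x
    by_cases hw : w i k = 0
    · rw [hw, zero_mul, zero_mul]
    · refine congrArg _ (congrArg (Distr.f · x) (Distr.eq_dirac fun y hy => ?_))
      exact (mul_eq_zero.1 (hsupp i k y (by simp [Distr.dirac, hy]))).resolve_left hw
  refine ⟨fun i => Distr.mixture (w i) (hw0 i) ms (μs i), ⟨hμ.1, hμ.2.1, fun x => ?_⟩,
    fun i hi => ?_⟩
  · calc μ'.f x = ∑ k, c k * (ms k).f x := hm.2.2 x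
      _ = ∑ i, ∑ k, w i k * (ms k).f x := by
        simp_rw [← hcol, Finset.sum_mul]; exact Finset.sum_comm
      _ = ∑ i, p i * (Distr.mixture (w i) (hw0 i) ms (μs i)).f x := by
        simp_rw [← hrow, Distr.sum_mul_mixture_f]
  · have h0 : ∑ k, w i k ≠ 0 := hrow i ▸ hi
    refine ⟨K, inferInstance, _, Es, ms, (isCombo_div_iff (hw0 i) h0).2 fun x => ?_,
      (isCombo_div_iff (hw0 i) h0).2 (Distr.sum_mul_mixture_f _ _ _ _), hstep⟩
    rw [hrow, hrowx]
    exact Finset.sum_congr rfl fun k _ => hξ i k x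

end Steps

section Bisimilarity

variable {τ}

theorem isBranchingBisim_eq : IsBranchingBisim τ (@Eq (Distr (PE Act))) := by
  refine ⟨fun _ _ h => h.symm, ?_, ?_⟩
  · rintro I _ p μs μ _ rfl hc
    exact ⟨μ, μs, .refl, rfl, hc, fun _ => rfl⟩
  · rintro μ _ α μ' rfl hstep
    exact ⟨μ, μ', .refl, Or.inl hstep, rfl, rfl⟩

theorem bb_refl (μ : Distr (PE Act)) : bb τ μ μ := ⟨Eq, isBranchingBisim_eq, rfl⟩

theorem bb_symm {μ ν : Distr (PE Act)} (h : bb τ μ ν) : bb τ ν μ :=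
  let ⟨R, hR, hμν⟩ := h
  ⟨R, hR, hR.1 hμν⟩

theorem bb_isBranchingBisim : IsBranchingBisim τ (bb (Act := Act) τ) := by
  refine ⟨fun _ _ => bb_symm, ?_, ?_⟩
  · rintro I _ p μs μ ν ⟨R, hR, hμν⟩ hc
    obtain ⟨ν', νs, hw, hμν', hc', hs⟩ := hR.2.1 I _ p μs μ ν hμν hc
    exact ⟨ν', νs, hw, ⟨R, hR, hμν'⟩, hc', fun i => ⟨R, hR, hs i⟩⟩
  · rintro μ ν α μ' ⟨R, hR, hμν⟩ hstep
    obtain ⟨ν', ν'', hw, hopt, hμν', hμν''⟩ := hR.2.2 μ ν α μ' hμν hstep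
    exact ⟨ν', ν'', hw, hopt, ⟨R, hR, hμν'⟩, ⟨R, hR, hμν''⟩⟩

theorem bb_exists_decomposition {J : Type} [Fintype J] {u : J → ℝ} {ξ : J → Distr (PE Act)}
    {μ ν : Distr (PE Act)} (h : bb τ μ ν) (hu : ∀ j, 0 ≤ u j)
    (hμ : ∀ x, (∑ j, u j) * μ.f x = ∑ j, u j * (ξ j).f x) :
    ∃ (ν' : Distr (PE Act)) (ζ : J → Distr (PE Act)),
      wtau τ ν ν' ∧ bb τ μ ν' ∧ (∀ j, bb τ (ξ j) (ζ j)) ∧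
      ∀ x, (∑ j, u j) * ν'.f x = ∑ j, u j * (ζ j).f x := by
  by_cases h0 : ∑ j, u j = 0
  · have hu0 : ∀ j, u j = 0 := fun j =>
      (Finset.sum_eq_zero_iff_of_nonneg fun j _ => hu j).1 h0 j (Finset.mem_univ j)
    exact ⟨ν, ξ, .refl, h, fun j => bb_refl _, fun x => by simp [hu0]⟩
  · obtain ⟨ν', ζ, hw, hμν', hc, hζ⟩ :=
      bb_isBranchingBisim.2.1 J _ _ ξ μ ν h ((isCombo_div_iff hu h0).2 hμ)
    exact ⟨ν', ζ, hw, hμν', hζ, (isCombo_div_iff hu h0).1 hc⟩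

def bbHull (τ : Act) (μ ν : Distr (PE Act)) : Prop :=
  ∃ (I : Type) (_ : Fintype I) (p : I → ℝ) (μs νs : I → Distr (PE Act)),
    IsCombo p μs μ ∧ IsCombo p νs ν ∧ ∀ i, bb τ (μs i) (νs i)

theorem bbHull_of_bb {μ ν : Distr (PE Act)} (h : bb τ μ ν) : bbHull τ μ ν :=
  ⟨PUnit, inferInstance, _, _, _, isCombo_punit μ, isCombo_punit ν, fun _ => h⟩

theorem bbHull_symm : Symmetric (bbHull (Act := Act) τ) :=
  fun _ _ ⟨I, hI, p, μs, νs, hμ, hν, h⟩ => ⟨I, hI, p, νs, μs, hν, hμ, fun i => bb_symm (h i)⟩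

/-- `κs` is coupled with the witnessing decomposition `μs`; each `μs i` splits along the coupling,
`νs i` follows by weak decomposability of `≈_b`, and the pieces are regrouped along `κs`. -/
theorem bbHull_weaklyDecomposable : WeaklyDecomposable τ (bbHull (Act := Act) τ) := by
  intro J _ q κs μ ν ⟨I, _, p, μs, νs, hμ, hν, hbb⟩ hq
  obtain ⟨w, ξ, hw0, hrow, hcol, hrowx, hcolx, -⟩ := hμ.exists_coupling hq
  have hsplit : ∀ i, ∃ (η : Distr (PE Act)) (ζ : J → Distr (PE Act)), wtau τ (νs i) η ∧
      bb τ (μs i) η ∧ (∀ j, bb τ (ξ i j) (ζ j)) ∧ ∀ x, p i * η.f x = ∑ j, w i j * (ζ j).f x :=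
    fun i => by
      simpa only [hrow] using
        bb_exists_decomposition (hbb i) (hw0 i) (by simpa only [hrow] using hrowx i)
  choose ηs ζ hwt hbb' hζ hηs using hsplit
  obtain ⟨η, hη⟩ := exists_isCombo hμ.1 hμ.2.1 ηs
  let κs' := fun j => Distr.mixture (fun i => w i j) (fun i => hw0 i j) (fun i => ζ i j) (κs j)
  refine ⟨η, κs', wtau_isConvexClosed I p νs ηs ν η hν hη hwt,
    ⟨I, inferInstance, p, μs, ηs, hμ, hη, hbb'⟩, ⟨hq.1, hq.2.1, fun x => ?_⟩, fun j => ?_⟩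
  · calc η.f x = ∑ i, ∑ j, w i j * (ζ i j).f x := by simp_rw [hη.2.2 x, hηs]
      _ = ∑ j, q j * (κs' j).f x := by
        rw [Finset.sum_comm]; simp_rw [κs', ← hcol, Distr.sum_mul_mixture_f]
  · by_cases h0 : q j = 0
    · rw [show κs' j = κs j from Distr.mixture_of_sum_eq_zero _ _ _ ((hcol j).trans h0)]
      exact bbHull_of_bb (bb_refl _)
    · rw [← hcol j] at h0
      exact ⟨I, inferInstance, _, fun i => ξ i j, fun i => ζ i j,
        (isCombo_div_iff (fun i => hw0 i j) h0).2 fun x => by rw [hcol, hcolx],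
        (isCombo_div_iff (fun i => hw0 i j) h0).2 (Distr.sum_mul_mixture_f _ _ _ _),
        fun i => hζ i j⟩

theorem bbHull_transfer {μ ν μ' : Distr (PE Act)} {α : Act} (h : bbHull τ μ ν)
    (hstep : dstep μ α μ') :
    ∃ ν' ν'', wtau τ ν ν' ∧ optStep τ ν' α ν'' ∧ bbHull τ μ ν' ∧ bbHull τ μ' ν'' := by
  obtain ⟨I, _, p, μs, νs, hμ, hν, hbb⟩ := h
  obtain ⟨μs', hμ', hsteps⟩ := hμ.exists_dstep hstep
  have hmatch : ∀ i, ∃ ν' ν'', wtau τ (νs i) ν' ∧ bb τ (μs i) ν' ∧ bb τ (μs' i) ν'' ∧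
      (p i ≠ 0 → optStep τ ν' α ν'') := by
    intro i
    by_cases hi : p i = 0
    · exact ⟨νs i, μs' i, .refl, hbb i, bb_refl _, absurd hi⟩
    · obtain ⟨ν', ν'', hw, hopt, hμν', hμν''⟩ :=
        bb_isBranchingBisim.2.2 _ _ _ _ (hbb i) (hsteps i hi)
      exact ⟨ν', ν'', hw, hμν', hμν'', fun _ => hopt⟩
  choose ηs ηs' hwt hbb' hbb'' hopt using hmatch
  obtain ⟨η, hη⟩ := exists_isCombo hμ.1 hμ.2.1 ηs
  obtain ⟨η', hη'⟩ := exists_isCombo hμ.1 hμ.2.1 ηs'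
  exact ⟨η, η', wtau_isConvexClosed I p νs ηs ν η hν hη hwt,
    (optStep_isConvexClosed α).of_ne_zero hη hη' hopt,
    ⟨I, inferInstance, p, μs, ηs, hμ, hη, hbb'⟩, ⟨I, inferInstance, p, μs', ηs', hμ', hη', hbb''⟩⟩

theorem bbHull_isBranchingBisim : IsBranchingBisim τ (bbHull (Act := Act) τ) :=
  ⟨bbHull_symm, bbHull_weaklyDecomposable, fun _ _ _ _ => bbHull_transfer⟩

end Bisimilarity

theorem IsMix.isCombo {X : Type} {r : ℝ} {μ₁ μ₂ μ : Distr X} (hr0 : 0 ≤ r) (hr1 : r ≤ 1)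
    (h : IsMix r μ₁ μ₂ μ) :
    IsCombo (fun b : Bool => if b then r else 1 - r) (fun b => if b then μ₁ else μ₂) μ :=
  ⟨fun b => by cases b <;> simp [hr0, hr1], by simp, fun x => by simp [h x]⟩

/-- Branching probabilistic bisimilarity is a congruence for probabilistic choice. -/
theorem statement2 {Act : Type} (τ : Act) {μ₁ μ₂ ν₁ ν₂ μ ν : Distr (PE Act)}
    (r : ℝ) (hr0 : 0 < r) (hr1 : r < 1)
    (h1 : bb τ μ₁ ν₁) (h2 : bb τ μ₂ ν₂)
    (hμ : IsMix r μ₁ μ₂ μ) (hν : IsMix r ν₁ ν₂ ν) :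
    bb τ μ ν :=
  ⟨bbHull τ, bbHull_isBranchingBisim, Bool, inferInstance, _, _, _,
    hμ.isCombo hr0.le hr1.le, hν.isCombo hr0.le hr1.le, fun b => by cases b <;> assumption⟩

end PBB
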